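/- Lipschitz sensitivity of QDP fixed points in the interpolation parameter: there exists a constant C, depending only on the reward distributions of the MDP and on γ (and m), such that for all λ, λ' ∈ [0,1]^{X×[m]}, ‖θ̂^π_λ − θ̂^π_{λ'}‖_∞ ≤ C·‖λ − λ'‖_∞. In particular, the map λ ↦ θ̂^π_λ is Lipschitz continuous, and one has the intermediate bound ‖θ̂^π_λ − θ̂^π_{λ'}‖_∞ ≤ (1/(1−γ))·‖(Π^λ − Π^{λ'}) T^π θ̂^π_λ‖_∞. -/

import Mathlib

open MeasureTheory ProbabilityTheory Set
open scoped ENNReal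

/-- Generalized inverse CDF (least τ-quantile). -/
noncomputable def invCDF (ν : Measure ℝ) (τ : ℝ) : ℝ := sInf {y | τ ≤ cdf ν y}

/-- Upper inverse CDF (greatest τ-quantile). -/
noncomputable def upInvCDF (ν : Measure ℝ) (τ : ℝ) : ℝ := sInf {y | τ < cdf ν y}

/-- Quantile level τ_i = (2i-1)/(2m), with `i : Fin m` zero-indexed. -/
noncomputable def qlevel (m : ℕ) (i : Fin m) : ℝ := (2 * (i : ℝ) + 1) / (2 * m)

/-- The uniform m-atom distribution with the given particle locations. -/
noncomputable def paramDistOne {m : ℕ} (θ : Fin m → ℝ) : Measure ℝ :=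
  (m : ℝ≥0∞)⁻¹ • ∑ i : Fin m, Measure.dirac (θ i)

/-- Return-distribution function associated with quantile parameters θ. -/
noncomputable def paramDist {X : Type*} {m : ℕ} (θ : X → Fin m → ℝ) : X → Measure ℝ :=
  fun x => paramDistOne (θ x)

/-- The distributional Bellman operator T^π. -/
noncomputable def bellman {X : Type*} [MeasurableSpace X]
    (P : X → Measure (ℝ × X)) (γ : ℝ) (η : X → Measure ℝ) : X → Measure ℝ :=
  fun x => (P x).bind (fun p => (η p.2).map (fun z => p.1 + γ * z))

/-- The quantile projection Π^λ, parameter-level output. -/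
noncomputable def projParam {X : Type*} {m : ℕ} (lam : X → Fin m → ℝ)
    (η : X → Measure ℝ) : X → Fin m → ℝ :=
  fun x i => (1 - lam x i) * invCDF (η x) (qlevel m i) + lam x i * upInvCDF (η x) (qlevel m i)

/-- The quantile projection Π^λ on return-distribution functions. -/
noncomputable def proj {X : Type*} {m : ℕ} (lam : X → Fin m → ℝ)
    (η : X → Measure ℝ) : X → Measure ℝ :=
  paramDist (projParam lam η)

/-- The projected distributional Bellman operator Π^λ T^π acting on parameters. -/
noncomputable def projBellmanParam {X : Type*} [MeasurableSpace X]
    (P : X → Measure (ℝ × X)) (γ : ℝ) {m : ℕ} (lam : X → Fin m → ℝ)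
    (θ : X → Fin m → ℝ) : X → Fin m → ℝ :=
  projParam lam (bellman P γ (paramDist θ))

/-- The cube [0,1]^{X×[m]} of interpolation parameters. -/
def unitCube (X : Type*) (m : ℕ) : Set (X → Fin m → ℝ) :=
  {lam | ∀ x i, lam x i ∈ Set.Icc (0:ℝ) 1}

/-- Wasserstein-∞ distance (valued in [0,∞]). -/
noncomputable def winf (ν ν' : Measure ℝ) : ℝ≥0∞ :=
  ⨆ t : Set.Ioo (0:ℝ) 1, ENNReal.ofReal |invCDF ν t - invCDF ν' t|

/-- Extension of w∞ to return-distribution functions: max over states. -/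
noncomputable def wbar {X : Type*} (η η' : X → Measure ℝ) : ℝ≥0∞ :=
  ⨆ x : X, winf (η x) (η' x)

/-- Wasserstein-1 distance between probability distributions on ℝ. -/
noncomputable def w1 (ν ν' : Measure ℝ) : ℝ :=
  ∫ t in Set.Ioo (0:ℝ) 1, |invCDF ν t - invCDF ν' t|

/-- Uniform m-atom distributions. -/
noncomputable def FQ (m : ℕ) : Set (Measure ℝ) :=
  {ν | ∃ z : Fin m → ℝ, ν = paramDistOne z}

/-!
The fixed point `θ̂_λ` of the `γ`-contraction `Π^λ T^π` is compared with the fixed point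
`θ̂_λ'` of `Π^λ' T^π` by the a posteriori estimate of Banach's theorem, started at `θ̂_λ`;
this is the intermediate bound. The contraction property holds because a shift of all particles
by at most `ε` shifts every CDF of `T^π η_θ` by at most `γε`, hence every lower and upper quantile
by at most `γε`, and `Π^λ` is a pointwise convex combination of these quantiles. Finally
`(Π^λ − Π^λ') T^π θ` equals `(λ − λ') · (F̄⁻¹ − F⁻¹)`, and the quantile spread `F̄⁻¹ − F⁻¹` of
`T^π θ̂_λ` is bounded uniformly in `λ` because `‖θ̂_λ‖ ≤ ‖Π^λ T^π 0‖ / (1 − γ)`.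
-/

section Quantile

variable {ν ν' : Measure ℝ} {τ ε : ℝ}

lemma sInf_le_sInf_add_of_forall_add_mem {S S' : Set ℝ} (hS' : BddBelow S') (hS : S.Nonempty)
    (h : ∀ y ∈ S, y + ε ∈ S') : sInf S' ≤ sInf S + ε := by
  have : sInf S' - ε ≤ sInf S :=
    le_csInf hS fun y hy => by linarith [csInf_le hS' (h y hy)]
  linarith

lemma bddBelow_setOf_le_cdf (hτ : 0 < τ) : BddBelow {y | τ ≤ cdf ν y} := by
  obtain ⟨y₀, hy₀⟩ := Filter.eventually_atBot.mp ((tendsto_cdf_atBot ν).eventually_lt_const hτ)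
  exact ⟨y₀, fun y hy => le_of_not_ge fun hyy₀ => (hy₀ y hyy₀).not_ge hy⟩

lemma bddBelow_setOf_lt_cdf (hτ : 0 < τ) : BddBelow {y | τ < cdf ν y} :=
  (bddBelow_setOf_le_cdf hτ).mono fun y (hy : τ < cdf ν y) => hy.le

lemma nonempty_setOf_lt_cdf (hτ : τ < 1) : {y | τ < cdf ν y}.Nonempty :=
  ((tendsto_cdf_atTop ν).eventually_const_lt hτ).exists

lemma nonempty_setOf_le_cdf (hτ : τ < 1) : {y | τ ≤ cdf ν y}.Nonempty :=
  (nonempty_setOf_lt_cdf hτ).mono fun y (hy : τ < cdf ν y) => hy.le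

lemma invCDF_le_add_of_cdf_le (hτ : τ ∈ Ioo 0 1) (h : ∀ y, cdf ν y ≤ cdf ν' (y + ε)) :
    invCDF ν' τ ≤ invCDF ν τ + ε :=
  sInf_le_sInf_add_of_forall_add_mem (bddBelow_setOf_le_cdf hτ.1) (nonempty_setOf_le_cdf hτ.2)
    fun y hy => le_trans hy (h y)

lemma upInvCDF_le_add_of_cdf_le (hτ : τ ∈ Ioo 0 1) (h : ∀ y, cdf ν y ≤ cdf ν' (y + ε)) :
    upInvCDF ν' τ ≤ upInvCDF ν τ + ε :=
  sInf_le_sInf_add_of_forall_add_mem (bddBelow_setOf_lt_cdf hτ.1) (nonempty_setOf_lt_cdf hτ.2)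
    fun y hy => lt_of_lt_of_le hy (h y)

lemma abs_invCDF_sub_le (hτ : τ ∈ Ioo 0 1) (h : ∀ y, cdf ν y ≤ cdf ν' (y + ε))
    (h' : ∀ y, cdf ν' y ≤ cdf ν (y + ε)) : |invCDF ν τ - invCDF ν' τ| ≤ ε :=
  abs_sub_le_iff.2
    ⟨by linarith [invCDF_le_add_of_cdf_le hτ h'], by linarith [invCDF_le_add_of_cdf_le hτ h]⟩

lemma abs_upInvCDF_sub_le (hτ : τ ∈ Ioo 0 1) (h : ∀ y, cdf ν y ≤ cdf ν' (y + ε))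
    (h' : ∀ y, cdf ν' y ≤ cdf ν (y + ε)) : |upInvCDF ν τ - upInvCDF ν' τ| ≤ ε :=
  abs_sub_le_iff.2
    ⟨by linarith [upInvCDF_le_add_of_cdf_le hτ h'], by linarith [upInvCDF_le_add_of_cdf_le hτ h]⟩

end Quantile

lemma qlevel_mem_Ioo {m : ℕ} (i : Fin m) : qlevel m i ∈ Ioo 0 1 := by
  have hi : (i : ℝ) + 1 ≤ m := by exact_mod_cast i.isLt
  have hi0 : (0 : ℝ) ≤ i := Nat.cast_nonneg _
  exact ⟨div_pos (by linarith) (by linarith), (div_lt_one (by linarith)).2 (by linarith)⟩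

section SupNorm

variable {X : Type*} [Fintype X] {m : ℕ}

lemma norm_le_of_forall_abs_apply_le {f : X → Fin m → ℝ} {c : ℝ} (hc : 0 ≤ c)
    (h : ∀ x i, |f x i| ≤ c) : ‖f‖ ≤ c :=
  (pi_norm_le_iff_of_nonneg hc).2 fun x => (pi_norm_le_iff_of_nonneg hc).2 fun i => h x i

lemma abs_apply_le_norm (f : X → Fin m → ℝ) (x : X) (i : Fin m) : |f x i| ≤ ‖f‖ :=
  (norm_le_pi_norm (f x) i).trans (norm_le_pi_norm f x)

lemma norm_one_sub_mul_add_mul_le_max {lam : X → Fin m → ℝ} (hlam : lam ∈ unitCube X m)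
    (a b : X → Fin m → ℝ) :
    ‖(1 - lam) * a + lam * b‖ ≤ max ‖a‖ ‖b‖ := by
  refine norm_le_of_forall_abs_apply_le (le_max_of_le_left (norm_nonneg _)) fun x i => ?_
  obtain ⟨hl0, hl1⟩ := hlam x i
  have ha := (abs_apply_le_norm a x i).trans (le_max_left ‖a‖ ‖b‖)
  have hb := (abs_apply_le_norm b x i).trans (le_max_right ‖a‖ ‖b‖)
  calc |(1 - lam x i) * a x i + lam x i * b x i|
      ≤ (1 - lam x i) * |a x i| + lam x i * |b x i| := by
        refine (abs_add_le _ _).trans_eq ?_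
        rw [abs_mul, abs_mul, abs_of_nonneg (sub_nonneg.2 hl1), abs_of_nonneg hl0]
    _ ≤ (1 - lam x i) * max ‖a‖ ‖b‖ + lam x i * max ‖a‖ ‖b‖ := by gcongr
    _ = max ‖a‖ ‖b‖ := by ring

end SupNorm

section Bellman

variable {X : Type*} {γ : ℝ} {m : ℕ}

lemma map_paramDist_apply (θ : X → Fin m → ℝ) (p : ℝ × X) {s : Set ℝ} (hs : MeasurableSet s) :
    (paramDist θ p.2).map (fun z => p.1 + γ * z) s
      = (m : ℝ≥0∞)⁻¹ * ∑ i : Fin m, s.indicator 1 (p.1 + γ * θ p.2 i) := by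
  rw [paramDist, paramDistOne, Measure.map_apply (by fun_prop) hs, Measure.smul_apply,
    Measure.finsetSum_apply, smul_eq_mul]
  congr 1
  refine Finset.sum_congr rfl fun i _ => ?_
  rw [Measure.dirac_apply' _ (hs.preimage (by fun_prop))]
  rfl

variable [MeasurableSpace X] [MeasurableSingletonClass X] [Countable X] {P : X → Measure (ℝ × X)}

lemma measurable_map_paramDist (θ : X → Fin m → ℝ) :
    Measurable fun p : ℝ × X => (paramDist θ p.2).map (fun z => p.1 + γ * z) := by
  refine Measure.measurable_of_measurable_coe _ fun s hs => ?_
  simp only [map_paramDist_apply θ _ hs]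
  have hθ (i : Fin m) : Measurable fun p : ℝ × X => θ p.2 i :=
    (measurable_of_countable fun x => θ x i).comp measurable_snd
  exact (Finset.measurable_sum _ fun i _ => (measurable_const.indicator hs).comp
    (measurable_fst.add ((hθ i).const_mul γ))).const_mul _

lemma bellman_paramDist_apply (θ : X → Fin m → ℝ) (x : X) {s : Set ℝ} (hs : MeasurableSet s) :
    bellman P γ (paramDist θ) x s
      = ∫⁻ p, (m : ℝ≥0∞)⁻¹ * ∑ i : Fin m, s.indicator 1 (p.1 + γ * θ p.2 i) ∂P x := by
  rw [bellman, Measure.bind_apply hs (measurable_map_paramDist θ).aemeasurable]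
  exact lintegral_congr fun p => map_paramDist_apply θ p hs

instance isProbabilityMeasure_bellman_paramDist [∀ x, IsProbabilityMeasure (P x)] [NeZero m]
    (θ : X → Fin m → ℝ) (x : X) : IsProbabilityMeasure (bellman P γ (paramDist θ) x) := by
  constructor
  simp [bellman_paramDist_apply θ x MeasurableSet.univ,
    ENNReal.inv_mul_cancel (NeZero.ne (m : ℝ≥0∞)) (ENNReal.natCast_ne_top m)]

lemma cdf_bellman_le_cdf_bellman_add [∀ x, IsProbabilityMeasure (P x)] [NeZero m] (hγ : 0 ≤ γ)
    {θ θ' : X → Fin m → ℝ} {ε : ℝ} (h : ∀ z i, θ' z i ≤ θ z i + ε) (x : X) (y : ℝ) :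
    cdf (bellman P γ (paramDist θ) x) y ≤ cdf (bellman P γ (paramDist θ') x) (y + γ * ε) := by
  rw [cdf_eq_real, cdf_eq_real, measureReal_def, measureReal_def]
  refine ENNReal.toReal_mono (measure_ne_top _ _) ?_
  rw [bellman_paramDist_apply θ x measurableSet_Iic, bellman_paramDist_apply θ' x measurableSet_Iic]
  refine lintegral_mono fun p => mul_le_mul_right (Finset.sum_le_sum fun i _ => ?_) _
  refine indicator_apply_le' (fun hc => (indicator_of_mem ?_ (1 : ℝ → ℝ≥0∞)).ge) fun _ => zero_le
  have := mul_le_mul_of_nonneg_left (h p.2 i) hγ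
  simp only [mem_Iic] at hc ⊢
  linarith

end Bellman

open scoped NNReal in
lemma ContractingWith.dist_le_of_isFixedPt_perturbation {α : Type*} [MetricSpace α] {K : ℝ≥0}
    {f g : α → α} (hg : ContractingWith K g) {x y : α} (hx : Function.IsFixedPt f x)
    (hy : Function.IsFixedPt g y) : dist x y ≤ dist (f x) (g x) / (1 - K) := by
  simpa only [hx.eq] using hg.dist_le_of_fixedPoint x hy

section ProjectedBellman

variable {X : Type*} [MeasurableSpace X] {γ : ℝ} {m : ℕ}

noncomputable def bellmanQuantiles (P : X → Measure (ℝ × X)) (γ : ℝ) (θ : X → Fin m → ℝ) :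
    X → Fin m → ℝ :=
  fun x i => invCDF (bellman P γ (paramDist θ) x) (qlevel m i)

noncomputable def bellmanUpperQuantiles (P : X → Measure (ℝ × X)) (γ : ℝ)
    (θ : X → Fin m → ℝ) : X → Fin m → ℝ :=
  fun x i => upInvCDF (bellman P γ (paramDist θ) x) (qlevel m i)

lemma projBellmanParam_eq (P : X → Measure (ℝ × X)) (lam θ : X → Fin m → ℝ) :
    projBellmanParam P γ lam θ
      = (1 - lam) * bellmanQuantiles P γ θ + lam * bellmanUpperQuantiles P γ θ :=
  rfl

variable [Fintype X] {P : X → Measure (ℝ × X)}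

lemma norm_projBellmanParam_sub_projBellmanParam_le (lam lam' θ : X → Fin m → ℝ) :
    ‖projBellmanParam P γ lam θ - projBellmanParam P γ lam' θ‖
      ≤ ‖lam - lam'‖ * ‖bellmanUpperQuantiles P γ θ - bellmanQuantiles P γ θ‖ := by
  have : projBellmanParam P γ lam θ - projBellmanParam P γ lam' θ
      = (lam - lam') * (bellmanUpperQuantiles P γ θ - bellmanQuantiles P γ θ) := by
    simp only [projBellmanParam_eq]; ring
  exact this ▸ norm_mul_le _ _

variable [MeasurableSingletonClass X] [∀ x, IsProbabilityMeasure (P x)]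

lemma cdf_bellman_le_cdf_bellman_add_norm_sub [NeZero m] (hγ : 0 ≤ γ) (θ θ' : X → Fin m → ℝ)
    (x : X) (y : ℝ) :
    cdf (bellman P γ (paramDist θ) x) y
      ≤ cdf (bellman P γ (paramDist θ') x) (y + γ * ‖θ - θ'‖) :=
  cdf_bellman_le_cdf_bellman_add hγ
    (fun z i => by
      have : |θ z i - θ' z i| ≤ ‖θ - θ'‖ := abs_apply_le_norm (θ - θ') z i
      linarith [neg_abs_le (θ z i - θ' z i)]) x y

lemma norm_bellmanQuantiles_sub_le (hγ : 0 ≤ γ) (θ θ' : X → Fin m → ℝ) :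
    ‖bellmanQuantiles P γ θ - bellmanQuantiles P γ θ'‖ ≤ γ * ‖θ - θ'‖ := by
  refine norm_le_of_forall_abs_apply_le (by positivity) fun x i => ?_
  have : NeZero m := ⟨i.pos.ne'⟩
  exact abs_invCDF_sub_le (qlevel_mem_Ioo i) (cdf_bellman_le_cdf_bellman_add_norm_sub hγ θ θ' x)
    (by simpa only [norm_sub_rev θ'] using cdf_bellman_le_cdf_bellman_add_norm_sub hγ θ' θ x)

lemma norm_bellmanUpperQuantiles_sub_le (hγ : 0 ≤ γ) (θ θ' : X → Fin m → ℝ) :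
    ‖bellmanUpperQuantiles P γ θ - bellmanUpperQuantiles P γ θ'‖ ≤ γ * ‖θ - θ'‖ := by
  refine norm_le_of_forall_abs_apply_le (by positivity) fun x i => ?_
  have : NeZero m := ⟨i.pos.ne'⟩
  exact abs_upInvCDF_sub_le (qlevel_mem_Ioo i) (cdf_bellman_le_cdf_bellman_add_norm_sub hγ θ θ' x)
    (by simpa only [norm_sub_rev θ'] using cdf_bellman_le_cdf_bellman_add_norm_sub hγ θ' θ x)

lemma contractingWith_projBellmanParam (hγ0 : 0 ≤ γ) (hγ1 : γ < 1) {lam : X → Fin m → ℝ}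
    (hlam : lam ∈ unitCube X m) : ContractingWith ⟨γ, hγ0⟩ (projBellmanParam P γ lam) := by
  refine ⟨hγ1, LipschitzWith.of_dist_le_mul fun θ θ' => ?_⟩
  have hdiff : projBellmanParam P γ lam θ - projBellmanParam P γ lam θ'
      = (1 - lam) * (bellmanQuantiles P γ θ - bellmanQuantiles P γ θ')
        + lam * (bellmanUpperQuantiles P γ θ - bellmanUpperQuantiles P γ θ') := by
    simp only [projBellmanParam_eq]; ring
  rw [dist_eq_norm, dist_eq_norm, hdiff]
  exact (norm_one_sub_mul_add_mul_le_max hlam _ _).trans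
    (max_le (norm_bellmanQuantiles_sub_le hγ0 θ θ') (norm_bellmanUpperQuantiles_sub_le hγ0 θ θ'))

lemma norm_le_of_projBellmanParam_eq_self (hγ0 : 0 ≤ γ) (hγ1 : γ < 1) {lam θ : X → Fin m → ℝ}
    (hlam : lam ∈ unitCube X m) (hθ : projBellmanParam P γ lam θ = θ) :
    ‖θ‖ ≤ max ‖bellmanQuantiles P γ (0 : X → Fin m → ℝ)‖
      ‖bellmanUpperQuantiles P γ (0 : X → Fin m → ℝ)‖ / (1 - γ) := by
  have h := (contractingWith_projBellmanParam hγ0 hγ1 hlam).dist_le_of_fixedPoint 0 hθ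
  rw [dist_zero_left, dist_zero_left, projBellmanParam_eq] at h
  exact h.trans
    (div_le_div_of_nonneg_right (norm_one_sub_mul_add_mul_le_max hlam _ _) (sub_nonneg.2 hγ1.le))

lemma norm_bellmanUpperQuantiles_sub_bellmanQuantiles_le (hγ : 0 ≤ γ) (θ : X → Fin m → ℝ) :
    ‖bellmanUpperQuantiles P γ θ - bellmanQuantiles P γ θ‖
      ≤ ‖bellmanUpperQuantiles P γ 0 - bellmanQuantiles P γ (0 : X → Fin m → ℝ)‖ + 2 * γ * ‖θ‖ := by
  have h := norm_sub_le_norm_sub_add_norm_sub (bellmanUpperQuantiles P γ θ)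
    (bellmanUpperQuantiles P γ 0) (bellmanQuantiles P γ θ)
  have h' := norm_sub_le_norm_sub_add_norm_sub (bellmanUpperQuantiles P γ 0)
    (bellmanQuantiles P γ 0) (bellmanQuantiles P γ θ)
  have hup := norm_bellmanUpperQuantiles_sub_le (P := P) hγ θ 0
  have hlow := norm_bellmanQuantiles_sub_le (P := P) hγ 0 θ
  rw [sub_zero] at hup
  rw [zero_sub, norm_neg] at hlow
  linarith

end ProjectedBellman

theorem qdp_fixed_point_sensitivity_general
    {X : Type*} [Fintype X] [MeasurableSpace X] [MeasurableSingletonClass X]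
    (P : X → Measure (ℝ × X)) (hP : ∀ x, IsProbabilityMeasure (P x))
    (γ : ℝ) (hγ0 : 0 ≤ γ) (hγ1 : γ < 1) {m : ℕ}
    (θhat : (X → Fin m → ℝ) → X → Fin m → ℝ)
    (hθhat : ∀ lam ∈ unitCube X m,
      projBellmanParam P γ lam (θhat lam) = θhat lam) :
    (∃ C : ℝ, ∀ lam ∈ unitCube X m, ∀ lam' ∈ unitCube X m,
      ‖θhat lam - θhat lam'‖ ≤ C * ‖lam - lam'‖)
    ∧ (∀ lam ∈ unitCube X m, ∀ lam' ∈ unitCube X m,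
      ‖θhat lam - θhat lam'‖ ≤ (1 / (1 - γ)) *
        ‖projBellmanParam P γ lam (θhat lam)
          - projBellmanParam P γ lam' (θhat lam)‖) := by
  have intermediate : ∀ lam ∈ unitCube X m, ∀ lam' ∈ unitCube X m,
      ‖θhat lam - θhat lam'‖ ≤ (1 / (1 - γ)) *
        ‖projBellmanParam P γ lam (θhat lam) - projBellmanParam P γ lam' (θhat lam)‖ :=
    fun lam hlam lam' hlam' => by
      rw [one_div_mul_eq_div, ← dist_eq_norm, ← dist_eq_norm]
      exact (contractingWith_projBellmanParam hγ0 hγ1 hlam').dist_le_of_isFixedPt_perturbation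
        (hθhat lam hlam) (hθhat lam' hlam')
  set R := max ‖bellmanQuantiles P γ (0 : X → Fin m → ℝ)‖
    ‖bellmanUpperQuantiles P γ (0 : X → Fin m → ℝ)‖
  set S := ‖bellmanUpperQuantiles P γ (0 : X → Fin m → ℝ) - bellmanQuantiles P γ 0‖
  refine ⟨⟨1 / (1 - γ) * (S + 2 * γ * (R / (1 - γ))), fun lam hlam lam' hlam' => ?_⟩,
    intermediate⟩
  have hbound := norm_le_of_projBellmanParam_eq_self hγ0 hγ1 hlam (hθhat lam hlam)
  calc ‖θhat lam - θhat lam'‖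
      ≤ 1 / (1 - γ) * (‖lam - lam'‖ * (S + 2 * γ * ‖θhat lam‖)) := by
        refine (intermediate lam hlam lam' hlam').trans ?_
        gcongr
        refine (norm_projBellmanParam_sub_projBellmanParam_le lam lam' _).trans ?_
        gcongr
        exact norm_bellmanUpperQuantiles_sub_bellmanQuantiles_le hγ0 _
    _ ≤ 1 / (1 - γ) * (‖lam - lam'‖ * (S + 2 * γ * (R / (1 - γ)))) := by
        gcongr
    _ = _ := by ring

/-- Lipschitz sensitivity of QDP fixed points in the interpolation
parameter: there is a constant `C` (depending only on the MDP and `γ`, `m`) with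
`‖θ̂^π_λ − θ̂^π_{λ'}‖_∞ ≤ C‖λ − λ'‖_∞`, together with the intermediate bound
`‖θ̂^π_λ − θ̂^π_{λ'}‖_∞ ≤ (1/(1−γ))‖(Π^λ − Π^{λ'}) T^π θ̂^π_λ‖_∞`. -/
theorem qdp_fixed_point_sensitivity
    {X : Type*} [Fintype X] [MeasurableSpace X] [MeasurableSingletonClass X]
    (P : X → Measure (ℝ × X)) (hP : ∀ x, IsProbabilityMeasure (P x))
    (hPmean : ∀ x, Integrable (fun p : ℝ × X => p.1) (P x))
    (γ : ℝ) (hγ0 : 0 ≤ γ) (hγ1 : γ < 1) {m : ℕ} (hm : 0 < m)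
    (θhat : (X → Fin m → ℝ) → X → Fin m → ℝ)
    (hθhat : ∀ lam ∈ unitCube X m,
      projBellmanParam P γ lam (θhat lam) = θhat lam)
    (hθhatUnique : ∀ lam ∈ unitCube X m, ∀ θ : X → Fin m → ℝ,
      projBellmanParam P γ lam θ = θ → θ = θhat lam) :
    (∃ C : ℝ, ∀ lam ∈ unitCube X m, ∀ lam' ∈ unitCube X m,
      ‖θhat lam - θhat lam'‖ ≤ C * ‖lam - lam'‖)
    ∧ (∀ lam ∈ unitCube X m, ∀ lam' ∈ unitCube X m,
      ‖θhat lam - θhat lam'‖ ≤ (1 / (1 - γ)) *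
        ‖projBellmanParam P γ lam (θhat lam)
          - projBellmanParam P γ lam' (θhat lam)‖) :=
  qdp_fixed_point_sensitivity_general P hP γ hγ0 hγ1 θhat hθhat
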